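/- Let ρ ≥ 1, let Σ₁ and Σ₂ be d×d positive definite matrices, and suppose there exists a d×d positive definite matrix H such that ‖I − H^{-1/2} Σ₁ H^{-1/2}‖_F ≤ ρ and ‖I − H^{-1/2} Σ₂ H^{-1/2}‖_F ≤ ρ. Then for every d×d positive definite matrix Σ: ‖Σ^{-1/2} Σ₁ Σ^{-1/2} − Σ^{-1/2} Σ₂ Σ^{-1/2}‖_F ≤ 20·ρ·max(‖Σ^{-1/2} Σ₁ Σ^{-1/2}‖_op, ‖Σ^{-1/2} Σ₂ Σ^{-1/2}‖_op). -/

import Mathlib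

/-!
Write `Σ^{-1/2} Σᵢ Σ^{-1/2} = M Xᵢ Mᴴ` with `Xᵢ = H^{-1/2} Σᵢ H^{-1/2}` and `M = Σ^{-1/2} H^{1/2}`,
so that `‖1 - Xᵢ‖_F ≤ ρ`. With `N = maxᵢ ‖M Xᵢ Mᴴ‖_op` and `S = X₁ + X₂` we have
`‖M S Mᴴ‖_op ≤ 2N`. Let `P` be the spectral projection of `S` onto `[1, ∞)` and `Q = 1 - P`, and split
`M (X₁ - X₂) Mᴴ = M Q D Mᴴ + M P D (M Q)ᴴ + M P D (M P)ᴴ` with `D = X₁ - X₂`.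
Every eigenvalue of `S` below `1` contributes more than `1` to `‖2 - S‖_F² ≤ 4ρ²`, so the first two
terms have rank at most `4ρ²`; a Cauchy–Schwarz argument for the positive `Xᵢ` bounds their operator
norms by `4N`, hence their Frobenius norms by `8ρN`. For the last term `P ≤ S` gives
`‖M P‖_op² ≤ 2N`, and `‖D‖_F ≤ 2ρ` bounds it by `4ρN`.
-/

open Matrix MeasureTheory ProbabilityTheory

noncomputable section

namespace ListDecCov

/-- Frobenius norm of a square real matrix. -/
def frobNorm {d : ℕ} (M : Matrix (Fin d) (Fin d) ℝ) : ℝ :=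
  Real.sqrt (∑ i, ∑ j, (M i j) ^ 2)

/-- Operator (spectral) norm of a square real matrix. -/
def opNorm {d : ℕ} (M : Matrix (Fin d) (Fin d) ℝ) : ℝ :=
  ‖Matrix.toEuclideanCLM (𝕜 := ℝ) M‖

/-- Euclidean (ℓ²) norm of a vector. -/
def vecNorm {d : ℕ} (v : Fin d → ℝ) : ℝ :=
  Real.sqrt (∑ i, (v i) ^ 2)

/-- The four Penrose equations characterizing the Moore–Penrose pseudoinverse. -/
def IsMoorePenrose {d : ℕ} (H Hd : Matrix (Fin d) (Fin d) ℝ) : Prop :=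
  H * Hd * H = H ∧ Hd * H * Hd = Hd ∧ (H * Hd)ᵀ = H * Hd ∧ (Hd * H)ᵀ = Hd * H

/-- Average of `f` over a finite set. -/
def fAvg {X V : Type*} [AddCommMonoid V] [Module ℝ V] (A : Finset X) (f : X → V) : V :=
  (A.card : ℝ)⁻¹ • ∑ x ∈ A, f x

/-- Average of `f` over a multiset. -/
def msAvg {X V : Type*} [AddCommMonoid V] [Module ℝ V] (T : Multiset X) (f : X → V) : V :=
  (T.card : ℝ)⁻¹ • (T.map f).sum

/-- Empirical covariance matrix of `f x`, `x` ranging over a finite set. -/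
def fCov {X : Type*} {d : ℕ} (A : Finset X) (f : X → (Fin d → ℝ)) :
    Matrix (Fin d) (Fin d) ℝ :=
  fAvg A (fun x => Matrix.vecMulVec (f x) (f x)) - Matrix.vecMulVec (fAvg A f) (fAvg A f)

/-- Empirical covariance matrix of `f x`, `x` ranging over a multiset. -/
def msCov {X : Type*} {d : ℕ} (T : Multiset X) (f : X → (Fin d → ℝ)) :
    Matrix (Fin d) (Fin d) ℝ :=
  msAvg T (fun x => Matrix.vecMulVec (f x) (f x)) - Matrix.vecMulVec (msAvg T f) (msAvg T f)

/-- Empirical variance of `g x`, `x` ranging over a finite set. -/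
def fVar {X : Type*} (A : Finset X) (g : X → ℝ) : ℝ :=
  fAvg A fun x => (g x - fAvg A g) ^ 2

/-- Empirical variance of `g x`, `x` ranging over a multiset. -/
def msVar {X : Type*} (T : Multiset X) (g : X → ℝ) : ℝ :=
  msAvg T fun x => (g x - msAvg T g) ^ 2

/-- The `k`-th smallest element (1-indexed) of a multiset of reals. -/
def kthSmallest (s : Multiset ℝ) (k : ℕ) : ℝ :=
  (s.sort (· ≤ ·)).getD (k - 1) 0

/-- Median (the `⌈m/2⌉`-th smallest element) of a multiset of reals of size `m`. -/
def msMedian (s : Multiset ℝ) : ℝ :=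
  kthSmallest s ((Multiset.card s + 1) / 2)

/-- Conditions (L.1)–(L.2) of stability, with respect to mean `μ`, covariance `Sig`
(with psd square root `sqrtSig`) and parameter `ε`. -/
def SatisfiesL12 {d : ℕ} (μ : Fin d → ℝ) (Sig sqrtSig : Matrix (Fin d) (Fin d) ℝ) (ε : ℝ)
    (A : Finset (Fin d → ℝ)) : Prop :=
  ∀ A' ⊆ A, (1 - ε) * (A.card : ℝ) ≤ (A'.card : ℝ) →
    (∀ v : Fin d → ℝ,
        |fAvg A' (fun x => v ⬝ᵥ (x - μ))| ≤ 0.1 * Real.sqrt (v ⬝ᵥ Sig.mulVec v)) ∧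
    (∀ U : Matrix (Fin d) (Fin d) ℝ, U.IsSymm →
        |Matrix.trace ((fAvg A' (fun x => Matrix.vecMulVec (x - μ) (x - μ)) - Sig) * U)|
          ≤ 0.1 * frobNorm (sqrtSig * U * sqrtSig))

/-- The positive semidefinite square root of a positive semidefinite matrix, as
`Matrix.PosSemidef.sqrt` was defined in Mathlib (December 2024). -/
def posSemidefSqrt {d : ℕ} {A : Matrix (Fin d) (Fin d) ℝ} (hA : A.PosSemidef) :
    Matrix (Fin d) (Fin d) ℝ :=
  (hA.1.eigenvectorUnitary : Matrix (Fin d) (Fin d) ℝ) *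
    diagonal ((↑) ∘ (Real.sqrt ·) ∘ hA.1.eigenvalues) *
    (star hA.1.eigenvectorUnitary : Matrix (Fin d) (Fin d) ℝ)

end ListDecCov

namespace ListDecCov

variable {d : ℕ}

section Frobenius

attribute [local instance] Matrix.frobeniusNormedAddCommGroup

lemma frobNorm_eq_norm (M : Matrix (Fin d) (Fin d) ℝ) : frobNorm M = ‖M‖ := by
  rw [frobNorm, Matrix.frobenius_norm_def, Real.sqrt_eq_rpow]
  simp [Real.norm_eq_abs, sq_abs]

lemma frobNorm_add_le (A B : Matrix (Fin d) (Fin d) ℝ) :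
    frobNorm (A + B) ≤ frobNorm A + frobNorm B := by
  simpa only [frobNorm_eq_norm] using norm_add_le A B

lemma frobNorm_sub_le (A B : Matrix (Fin d) (Fin d) ℝ) :
    frobNorm (A - B) ≤ frobNorm A + frobNorm B := by
  simpa only [frobNorm_eq_norm] using norm_sub_le A B

end Frobenius

end ListDecCov

open scoped MatrixOrder Matrix.Norms.L2Operator ComplexOrder

namespace Matrix

variable {𝕜 n : Type*} [RCLike 𝕜] [Fintype n] [DecidableEq n]

lemma continuousOn_spectrum (A : Matrix n n 𝕜) (f : ℝ → ℝ) : ContinuousOn f (spectrum ℝ A) :=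
  finite_real_spectrum.continuousOn f

lemma cfc_mul_mul_cfc_le {S : Matrix n n 𝕜} (hS : 0 ≤ S) {f : ℝ → ℝ} (hf : ∀ x, f x ^ 2 ≤ 1) :
    cfc f S * S * cfc f S ≤ S := by
  have hcont := continuousOn_spectrum S
  calc cfc f S * S * cfc f S = cfc (fun x => f x * x * f x) S := by
        rw [cfc_mul _ _ S (hcont _) (hcont _), cfc_mul _ _ S (hcont _) (hcont _), cfc_id' ℝ S]
    _ ≤ cfc id S := cfc_mono (fun x hx => by
        have hx0 := spectrum_nonneg_of_nonneg hS hx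
        have : f x * x * f x = f x ^ 2 * x := by ring
        rw [this, id]
        nlinarith [hf x]) (hcont _) (hcont _)
    _ = S := cfc_id ℝ S

lemma cfc_le_self {S : Matrix n n 𝕜} (hS : 0 ≤ S) {f : ℝ → ℝ} (hf : ∀ x, 0 ≤ x → f x ≤ x) :
    cfc f S ≤ S := by
  have hcont := continuousOn_spectrum S
  calc cfc f S ≤ cfc id S :=
        cfc_mono (fun x hx => hf x (spectrum_nonneg_of_nonneg hS hx)) (hcont _) (hcont _)
    _ = S := cfc_id ℝ S

lemma rank_cfc {A : Matrix n n 𝕜} (hA : A.IsHermitian) (f : ℝ → ℝ) :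
    (cfc f A).rank = Fintype.card {i // f (hA.eigenvalues i) ≠ 0} := by
  rw [hA.cfc_eq, IsHermitian.cfc, Unitary.conjStarAlgAut_apply, ← Unitary.coe_star]
  simp [-isUnit_iff_ne_zero, -Unitary.coe_star, rank_diagonal]

lemma trace_cfc {A : Matrix n n 𝕜} (hA : A.IsHermitian) (f : ℝ → ℝ) :
    (cfc f A).trace = ∑ i, (f (hA.eigenvalues i) : 𝕜) := by
  rw [hA.cfc_eq, IsHermitian.cfc, Unitary.conjStarAlgAut_apply, trace_mul_cycle,
    Unitary.coe_star_mul_self, Matrix.one_mul, trace_diagonal]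
  rfl

lemma reApplyInnerSelf_toEuclideanCLM (A : Matrix n n 𝕜) (x : EuclideanSpace 𝕜 n) :
    (toEuclideanCLM (𝕜 := 𝕜) A).reApplyInnerSelf x =
      RCLike.re (star (WithLp.ofLp x) ⬝ᵥ A *ᵥ WithLp.ofLp x) := by
  rw [ContinuousLinearMap.reApplyInnerSelf_apply, ← inner_re_symm,
    EuclideanSpace.inner_eq_star_dotProduct, ofLp_toEuclideanCLM, dotProduct_comm]

lemma l2_opNorm_le_of_nonneg_of_le {A B : Matrix n n 𝕜} (hA : 0 ≤ A) (hAB : A ≤ B) :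
    ‖A‖ ≤ ‖B‖ := by
  -- The norm of a positive operator is the supremum of its (nonnegative) Rayleigh quotient.
  have hquad (x : EuclideanSpace 𝕜 n) :
      0 ≤ (toEuclideanCLM (𝕜 := 𝕜) A).reApplyInnerSelf x ∧
        (toEuclideanCLM (𝕜 := 𝕜) A).reApplyInnerSelf x ≤
          (toEuclideanCLM (𝕜 := 𝕜) B).reApplyInnerSelf x := by
    have h0 := (RCLike.nonneg_iff.mp (hA.posSemidef.dotProduct_mulVec_nonneg (WithLp.ofLp x))).1
    have h1 := (RCLike.nonneg_iff.mp ((le_iff.mp hAB).dotProduct_mulVec_nonneg (WithLp.ofLp x))).1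
    rw [sub_mulVec, dotProduct_sub, map_sub] at h1
    simp only [reApplyInnerSelf_toEuclideanCLM]
    exact ⟨h0, sub_nonneg.mp h1⟩
  have hsymm :
      (toEuclideanCLM (𝕜 := 𝕜) A : EuclideanSpace 𝕜 n →ₗ[𝕜] EuclideanSpace 𝕜 n).IsSymmetric :=
    isSymmetric_toEuclideanLin_iff.mpr hA.posSemidef.isHermitian
  rw [cstar_norm_def, cstar_norm_def, ContinuousLinearMap.norm_eq_iSup_rayleighQuotient _ hsymm]
  refine ciSup_le fun x => ?_
  obtain ⟨h0, h1⟩ := hquad x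
  rw [abs_of_nonneg (div_nonneg h0 (sq_nonneg _))]
  exact (div_le_div_of_nonneg_right h1 (sq_nonneg _)).trans
    ((le_abs_self _).trans (ContinuousLinearMap.rayleighQuotient_le_norm _ x))

lemma l2_opNorm_conj_le_of_conj_le {S T : Matrix n n 𝕜} (hS : 0 ≤ S) (hT : T * S * Tᴴ ≤ S)
    (M : Matrix n n 𝕜) : ‖(M * T) * S * (M * T)ᴴ‖ ≤ ‖M * S * Mᴴ‖ := by
  have e : (M * T) * S * (M * T)ᴴ = M * (T * S * Tᴴ) * Mᴴ := by
    rw [conjTranspose_mul]; simp only [Matrix.mul_assoc]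
  rw [e]
  exact l2_opNorm_le_of_nonneg_of_le
    (star_right_conjugate_nonneg (star_right_conjugate_nonneg hS T) M)
    (star_right_conjugate_le_conjugate hT M)

lemma sq_l2_opNorm_mul_le_of_le {P S : Matrix n n 𝕜} (hPH : Pᴴ = P) (hPP : P * P = P)
    (hPS : P ≤ S) (M : Matrix n n 𝕜) : ‖M * P‖ ^ 2 ≤ ‖M * S * Mᴴ‖ := by
  have hP : 0 ≤ P := by
    simpa only [star_eq_conjTranspose, hPH, hPP] using mul_star_self_nonneg P
  have e : (M * P) * (M * P)ᴴ = M * P * Mᴴ := by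
    rw [conjTranspose_mul, hPH, Matrix.mul_assoc, ← Matrix.mul_assoc P, hPP, Matrix.mul_assoc]
  rw [sq, ← CStarRing.norm_self_mul_star, star_eq_conjTranspose, e]
  exact l2_opNorm_le_of_nonneg_of_le (star_right_conjugate_nonneg hP M)
    (star_right_conjugate_le_conjugate hPS M)

lemma l2_opNorm_mul_mul_conjTranspose_le {X : Matrix n n 𝕜} (hX : 0 ≤ X) {c : ℝ}
    (A B : Matrix n n 𝕜) (hA : ‖A * X * Aᴴ‖ ≤ c) (hB : ‖B * X * Bᴴ‖ ≤ c) :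
    ‖A * X * Bᴴ‖ ≤ c := by
  -- Cauchy–Schwarz: with `X = R Rᴴ`, `A X Bᴴ = (A R) (B R)ᴴ` and `‖A R‖² = ‖A X Aᴴ‖`.
  set R := CFC.sqrt X
  have hR : Rᴴ = R := (CFC.sqrt_nonneg X).isSelfAdjoint
  have hX' : X = R * Rᴴ := by rw [hR]; exact (CFC.sqrt_mul_sqrt_self X).symm
  have hnorm (C : Matrix n n 𝕜) : ‖C * X * Cᴴ‖ = ‖C * R‖ ^ 2 := by
    rw [sq, ← CStarRing.norm_self_mul_star, hX', star_eq_conjTranspose, conjTranspose_mul]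
    simp only [Matrix.mul_assoc]
  have hA' : ‖A * R‖ ^ 2 ≤ c := hnorm A ▸ hA
  have hB' : ‖B * R‖ ^ 2 ≤ c := hnorm B ▸ hB
  calc ‖A * X * Bᴴ‖ = ‖(A * R) * (B * R)ᴴ‖ := by
        rw [hX', conjTranspose_mul]; simp only [Matrix.mul_assoc]
    _ ≤ ‖A * R‖ * ‖(B * R)ᴴ‖ := l2_opNorm_mul _ _
    _ = ‖A * R‖ * ‖B * R‖ := by rw [l2_opNorm_conjTranspose]
    _ ≤ c := by nlinarith [norm_nonneg (A * R), norm_nonneg (B * R), sq_nonneg (‖A * R‖ - ‖B * R‖)]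

lemma l2_opNorm_mul_sub_mul_conjTranspose_le {X₁ X₂ : Matrix n n 𝕜} (h₁ : 0 ≤ X₁) (h₂ : 0 ≤ X₂)
    {c : ℝ} (A B : Matrix n n 𝕜) (hA : ‖A * (X₁ + X₂) * Aᴴ‖ ≤ c)
    (hB : ‖B * (X₁ + X₂) * Bᴴ‖ ≤ c) :
    ‖A * (X₁ - X₂) * Bᴴ‖ ≤ 2 * c := by
  have hconj {X : Matrix n n 𝕜} (hX : 0 ≤ X) (hXS : X ≤ X₁ + X₂) (C : Matrix n n 𝕜)
      (hC : ‖C * (X₁ + X₂) * Cᴴ‖ ≤ c) : ‖C * X * Cᴴ‖ ≤ c :=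
    (l2_opNorm_le_of_nonneg_of_le (star_right_conjugate_nonneg hX C)
      (star_right_conjugate_le_conjugate hXS C)).trans hC
  have hX₁ : X₁ ≤ X₁ + X₂ := le_add_of_nonneg_right h₂
  have hX₂ : X₂ ≤ X₁ + X₂ := le_add_of_nonneg_left h₁
  calc ‖A * (X₁ - X₂) * Bᴴ‖ = ‖A * X₁ * Bᴴ - A * X₂ * Bᴴ‖ := by
        rw [Matrix.mul_sub, Matrix.sub_mul]
    _ ≤ ‖A * X₁ * Bᴴ‖ + ‖A * X₂ * Bᴴ‖ := norm_sub_le _ _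
    _ ≤ c + c := add_le_add
        (l2_opNorm_mul_mul_conjTranspose_le h₁ A B (hconj h₁ hX₁ A hA) (hconj h₁ hX₁ B hB))
        (l2_opNorm_mul_mul_conjTranspose_le h₂ A B (hconj h₂ hX₂ A hA) (hconj h₂ hX₂ B hB))
    _ = 2 * c := by ring

lemma inv_mul_mul_inv_eq_conj {s t : Matrix n n 𝕜} (hs : IsUnit s.det) (hsH : sᴴ = s)
    (htH : tᴴ = t) (A : Matrix n n 𝕜) :
    t⁻¹ * A * t⁻¹ = (t⁻¹ * s) * (s⁻¹ * A * s⁻¹) * (t⁻¹ * s)ᴴ := by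
  rw [conjTranspose_mul, hsH, conjTranspose_nonsing_inv, htH]
  calc t⁻¹ * A * t⁻¹ = t⁻¹ * (s * s⁻¹) * A * (s⁻¹ * s) * t⁻¹ := by
        rw [mul_nonsing_inv s hs, nonsing_inv_mul s hs, Matrix.mul_one, Matrix.mul_one]
    _ = _ := by simp only [Matrix.mul_assoc]

end Matrix

namespace ListDecCov

variable {d : ℕ}

lemma frobNorm_nonneg (M : Matrix (Fin d) (Fin d) ℝ) : 0 ≤ frobNorm M := Real.sqrt_nonneg _

lemma sq_frobNorm (M : Matrix (Fin d) (Fin d) ℝ) : frobNorm M ^ 2 = ∑ i, ∑ j, M i j ^ 2 :=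
  Real.sq_sqrt (by positivity)

lemma sq_frobNorm_eq_trace (M : Matrix (Fin d) (Fin d) ℝ) : frobNorm M ^ 2 = (Mᴴ * M).trace := by
  rw [sq_frobNorm, trace, Finset.sum_comm]
  simp [mul_apply, sq]

lemma frobNorm_conjTranspose (M : Matrix (Fin d) (Fin d) ℝ) : frobNorm Mᴴ = frobNorm M := by
  rw [frobNorm, frobNorm, Finset.sum_comm]
  simp

lemma frobNorm_mul_le (A B : Matrix (Fin d) (Fin d) ℝ) :
    frobNorm (A * B) ≤ ‖A‖ * frobNorm B := by
  have hcol (v : Fin d → ℝ) : ∑ i, (A *ᵥ v) i ^ 2 ≤ ‖A‖ ^ 2 * ∑ i, v i ^ 2 := by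
    have h := pow_le_pow_left₀ (norm_nonneg _) (l2_opNorm_mulVec A (WithLp.toLp 2 v)) 2
    rw [mul_pow, EuclideanSpace.norm_sq_eq, EuclideanSpace.norm_sq_eq] at h
    simpa [Real.norm_eq_abs, sq_abs] using h
  rw [← pow_le_pow_iff_left₀ (frobNorm_nonneg _) (mul_nonneg (norm_nonneg _) (frobNorm_nonneg B))
    two_ne_zero, mul_pow, sq_frobNorm, sq_frobNorm, Finset.sum_comm,
    Finset.sum_comm (f := fun i j => B i j ^ 2), Finset.mul_sum]
  refine Finset.sum_le_sum fun j _ => ?_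
  simpa [mulVec, dotProduct, mul_apply] using hcol (fun k => B k j)

lemma frobNorm_conj_le (A X : Matrix (Fin d) (Fin d) ℝ) :
    frobNorm (A * X * Aᴴ) ≤ ‖A‖ ^ 2 * frobNorm X := by
  have hXA : frobNorm (X * Aᴴ) ≤ ‖A‖ * frobNorm X := by
    have h := frobNorm_mul_le A Xᴴ
    rwa [frobNorm_conjTranspose, ← frobNorm_conjTranspose, conjTranspose_mul,
      conjTranspose_conjTranspose] at h
  calc frobNorm (A * X * Aᴴ) ≤ ‖A‖ * frobNorm (X * Aᴴ) := by
        rw [Matrix.mul_assoc]; exact frobNorm_mul_le _ _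
    _ ≤ ‖A‖ * (‖A‖ * frobNorm X) := mul_le_mul_of_nonneg_left hXA (norm_nonneg _)
    _ = ‖A‖ ^ 2 * frobNorm X := by ring

lemma sq_frobNorm_le_rank_mul (K : Matrix (Fin d) (Fin d) ℝ) :
    frobNorm K ^ 2 ≤ K.rank * ‖K‖ ^ 2 := by
  -- `‖K‖_F²` is the sum of the eigenvalues of `Kᴴ K`; `rank K` of them are nonzero, each at most
  -- `‖Kᴴ K‖ = ‖K‖²`.
  have hK := isHermitian_conjTranspose_mul_self K
  set μ := hK.eigenvalues
  have hμ (i : Fin d) : μ i ≤ ‖K‖ ^ 2 := by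
    have h := norm_apply_le_norm_cfc id (Kᴴ * K) (hK.eigenvalues_mem_spectrum_real i)
      (continuousOn_spectrum _ _) hK.isSelfAdjoint
    rw [cfc_id ℝ _ hK.isSelfAdjoint, l2_opNorm_conjTranspose_mul_self, id, Real.norm_eq_abs] at h
    calc μ i ≤ |μ i| := le_abs_self _
      _ ≤ ‖K‖ * ‖K‖ := h
      _ = ‖K‖ ^ 2 := (sq _).symm
  have hcard : (Finset.univ.filter fun i => μ i ≠ 0).card = K.rank := by
    rw [← rank_conjTranspose_mul_self K, hK.rank_eq_card_non_zero_eigs, Fintype.card_subtype]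
  calc frobNorm K ^ 2 = ∑ i, μ i := by
        rw [sq_frobNorm_eq_trace, hK.trace_eq_sum_eigenvalues]; rfl
    _ = ∑ i ∈ Finset.univ.filter fun i => μ i ≠ 0, μ i := (Finset.sum_filter_ne_zero _).symm
    _ ≤ ∑ i ∈ Finset.univ.filter fun i => μ i ≠ 0, ‖K‖ ^ 2 := Finset.sum_le_sum fun i _ => hμ i
    _ = K.rank * ‖K‖ ^ 2 := by rw [Finset.sum_const, hcard, nsmul_eq_mul]

lemma frobNorm_le_mul_of_rank_le {K : Matrix (Fin d) (Fin d) ℝ} {r c : ℝ} (hr : 0 ≤ r)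
    (hrank : (K.rank : ℝ) ≤ r ^ 2) (hc : ‖K‖ ≤ c) : frobNorm K ≤ r * c := by
  have hc0 : 0 ≤ c := (norm_nonneg K).trans hc
  rw [← pow_le_pow_iff_left₀ (frobNorm_nonneg K) (mul_nonneg hr hc0) two_ne_zero, mul_pow]
  exact (sq_frobNorm_le_rank_mul K).trans
    (mul_le_mul hrank (pow_le_pow_left₀ (norm_nonneg K) hc 2) (by positivity) (sq_nonneg r))

lemma sq_frobNorm_cfc {A : Matrix (Fin d) (Fin d) ℝ} (hA : A.IsHermitian) (f : ℝ → ℝ) :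
    frobNorm (cfc f A) ^ 2 = ∑ i, f (hA.eigenvalues i) ^ 2 := by
  rw [sq_frobNorm_eq_trace, ← star_eq_conjTranspose, (cfc_predicate f A).star_eq,
    ← cfc_mul f f A (continuousOn_spectrum _ _) (continuousOn_spectrum _ _), trace_cfc hA]
  simp [sq]

/-- `P` is the spectral projection of `S` onto `[1, ∞)`; each eigenvalue `μ < 1` of `S` counted by
`rank (1 - P)` contributes `(2 - μ)² > 1` to `‖2 - S‖_F²`. -/
lemma exists_projection_le_of_nonneg {S : Matrix (Fin d) (Fin d) ℝ} (hS : 0 ≤ S) :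
    ∃ P : Matrix (Fin d) (Fin d) ℝ, Pᴴ = P ∧ P * P = P ∧ P ≤ S ∧ P * S * P ≤ S ∧
      (1 - P) * S * (1 - P) ≤ S ∧ ((1 - P).rank : ℝ) ≤ frobNorm (2 - S) ^ 2 := by
  have hS' : S.IsHermitian := hS.posSemidef.isHermitian
  have hcont := continuousOn_spectrum S
  set p : ℝ → ℝ := fun x => if 1 ≤ x then 1 else 0
  have hQ : 1 - cfc p S = cfc (fun x => 1 - p x) S := by
    rw [cfc_sub _ _ S (hcont _) (hcont _), cfc_const_one ℝ S hS'.isSelfAdjoint]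
  have htwo : 2 - S = cfc (fun x : ℝ => 2 - x) S := by
    rw [cfc_sub _ _ S (hcont _) (hcont _), cfc_const (2 : ℝ) S hS'.isSelfAdjoint,
      cfc_id' ℝ S hS'.isSelfAdjoint, map_ofNat]
  refine ⟨cfc p S, (cfc_predicate p S).star_eq, ?_, cfc_le_self hS fun x hx => ?_,
    cfc_mul_mul_cfc_le hS fun x => ?_, hQ ▸ cfc_mul_mul_cfc_le hS fun x => ?_, ?_⟩
  · rw [← cfc_mul p p S (hcont _) (hcont _)]
    congr 1
    funext x
    by_cases h : 1 ≤ x <;> simp [p, h]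
  · by_cases h : 1 ≤ x <;> simp [p, h, hx]
  · by_cases h : 1 ≤ x <;> simp [p, h]
  · by_cases h : 1 ≤ x <;> simp [p, h]
  · rw [hQ, rank_cfc hS', htwo, sq_frobNorm_cfc hS', Fintype.card_subtype, Finset.card_filter]
    push_cast
    refine Finset.sum_le_sum fun i _ => ?_
    by_cases h : 1 ≤ hS'.eigenvalues i
    · simp [p, h, sq_nonneg]
    · simp only [p, h, if_false, sub_zero, ne_eq, one_ne_zero, not_false_eq_true, if_true]
      nlinarith

theorem frobNorm_conj_sub_le_of_projection (M : Matrix (Fin d) (Fin d) ℝ)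
    {X₁ X₂ P : Matrix (Fin d) (Fin d) ℝ} (h₁ : 0 ≤ X₁) (h₂ : 0 ≤ X₂) (hPH : Pᴴ = P)
    (hPP : P * P = P) (hPS : P ≤ X₁ + X₂) (hPSP : P * (X₁ + X₂) * P ≤ X₁ + X₂)
    (hQSQ : (1 - P) * (X₁ + X₂) * (1 - P) ≤ X₁ + X₂) {r c : ℝ} (hr : 0 ≤ r)
    (hrank : ((1 - P).rank : ℝ) ≤ r ^ 2) (hc : ‖M * (X₁ + X₂) * Mᴴ‖ ≤ c) :
    frobNorm (M * X₁ * Mᴴ - M * X₂ * Mᴴ) ≤ 4 * r * c + c * frobNorm (X₁ - X₂) := by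
  set Q := 1 - P
  have hS : 0 ≤ X₁ + X₂ := add_nonneg h₁ h₂
  have hQH : Qᴴ = Q := by rw [conjTranspose_sub, conjTranspose_one, hPH]
  have hMQ : ‖(M * Q) * (X₁ + X₂) * (M * Q)ᴴ‖ ≤ c :=
    (l2_opNorm_conj_le_of_conj_le hS (by rwa [hQH]) M).trans hc
  have hMP : ‖(M * P) * (X₁ + X₂) * (M * P)ᴴ‖ ≤ c :=
    (l2_opNorm_conj_le_of_conj_le hS (by rwa [hPH]) M).trans hc
  have hT₁ : frobNorm ((M * Q) * (X₁ - X₂) * Mᴴ) ≤ r * (2 * c) := by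
    refine frobNorm_le_mul_of_rank_le hr (le_trans ?_ hrank)
      (l2_opNorm_mul_sub_mul_conjTranspose_le h₁ h₂ _ _ hMQ hc)
    exact_mod_cast ((rank_mul_le_left _ _).trans (rank_mul_le_left _ _)).trans
      (rank_mul_le_right _ _)
  have hT₂ : frobNorm ((M * P) * (X₁ - X₂) * (M * Q)ᴴ) ≤ r * (2 * c) := by
    refine frobNorm_le_mul_of_rank_le hr (le_trans ?_ hrank)
      (l2_opNorm_mul_sub_mul_conjTranspose_le h₁ h₂ _ _ hMP hMQ)
    exact_mod_cast ((rank_mul_le_right _ _).trans (rank_conjTranspose _).le).trans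
      (rank_mul_le_right _ _)
  have hT₃ : frobNorm ((M * P) * (X₁ - X₂) * (M * P)ᴴ) ≤ c * frobNorm (X₁ - X₂) :=
    (frobNorm_conj_le _ _).trans (mul_le_mul_of_nonneg_right
      ((sq_l2_opNorm_mul_le_of_le hPH hPP hPS M).trans hc) (frobNorm_nonneg _))
  have hsplit : M * X₁ * Mᴴ - M * X₂ * Mᴴ = (M * Q) * (X₁ - X₂) * Mᴴ +
      (M * P) * (X₁ - X₂) * (M * Q)ᴴ + (M * P) * (X₁ - X₂) * (M * P)ᴴ := by
    rw [conjTranspose_mul, conjTranspose_mul, hQH, hPH]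
    simp only [Q]
    noncomm_ring
  rw [hsplit]
  calc _ ≤ frobNorm ((M * Q) * (X₁ - X₂) * Mᴴ) + frobNorm ((M * P) * (X₁ - X₂) * (M * Q)ᴴ) +
        frobNorm ((M * P) * (X₁ - X₂) * (M * P)ᴴ) :=
        (frobNorm_add_le _ _).trans (add_le_add_left (frobNorm_add_le _ _) _)
    _ ≤ 4 * r * c + c * frobNorm (X₁ - X₂) := by linarith

theorem frobNorm_conj_sub_le {ρ : ℝ} (M : Matrix (Fin d) (Fin d) ℝ)
    {X₁ X₂ : Matrix (Fin d) (Fin d) ℝ} (h₁ : 0 ≤ X₁) (h₂ : 0 ≤ X₂)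
    (hb₁ : frobNorm (1 - X₁) ≤ ρ) (hb₂ : frobNorm (1 - X₂) ≤ ρ) :
    frobNorm (M * X₁ * Mᴴ - M * X₂ * Mᴴ) ≤ 20 * ρ * max ‖M * X₁ * Mᴴ‖ ‖M * X₂ * Mᴴ‖ := by
  set N := max ‖M * X₁ * Mᴴ‖ ‖M * X₂ * Mᴴ‖
  obtain ⟨P, hPH, hPP, hPS, hPSP, hQSQ, hrank⟩ := exists_projection_le_of_nonneg (add_nonneg h₁ h₂)
  have hρ : 0 ≤ ρ := (frobNorm_nonneg _).trans hb₁
  have hN : 0 ≤ N := (norm_nonneg _).trans (le_max_left _ _)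
  have hM : ‖M * (X₁ + X₂) * Mᴴ‖ ≤ 2 * N := by
    rw [Matrix.mul_add, Matrix.add_mul, two_mul]
    exact (norm_add_le _ _).trans (add_le_add (le_max_left _ _) (le_max_right _ _))
  have hD : frobNorm (X₁ - X₂) ≤ 2 * ρ := by
    have := frobNorm_sub_le (1 - X₂) (1 - X₁)
    rw [sub_sub_sub_cancel_left] at this
    linarith
  have h2S : frobNorm (2 - (X₁ + X₂)) ≤ 2 * ρ := by
    have := frobNorm_add_le (1 - X₁) (1 - X₂)
    rw [show (1 - X₁) + (1 - X₂) = 2 - (X₁ + X₂) by rw [← one_add_one_eq_two]; abel] at this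
    linarith
  have hbound := frobNorm_conj_sub_le_of_projection M h₁ h₂ hPH hPP hPS hPSP hQSQ
    (by linarith) (hrank.trans (pow_le_pow_left₀ (frobNorm_nonneg _) h2S 2)) hM
  nlinarith [mul_le_mul_of_nonneg_left hD (by linarith : (0 : ℝ) ≤ 2 * N)]

lemma posSemidefSqrt_eq_cfc {A : Matrix (Fin d) (Fin d) ℝ} (hA : A.PosSemidef) :
    posSemidefSqrt hA = cfc Real.sqrt A := by
  rw [hA.isHermitian.cfc_eq, IsHermitian.cfc, Unitary.conjStarAlgAut_apply]
  rfl

lemma conjTranspose_posSemidefSqrt {A : Matrix (Fin d) (Fin d) ℝ} (hA : A.PosSemidef) :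
    (posSemidefSqrt hA)ᴴ = posSemidefSqrt hA := by
  rw [posSemidefSqrt_eq_cfc]
  exact IsSelfAdjoint.star_eq (cfc_predicate _ A)

lemma posSemidefSqrt_mul_self {A : Matrix (Fin d) (Fin d) ℝ} (hA : A.PosSemidef) :
    posSemidefSqrt hA * posSemidefSqrt hA = A := by
  have hcont := continuousOn_spectrum A
  rw [posSemidefSqrt_eq_cfc, ← cfc_mul _ _ A (hcont _) (hcont _)]
  conv_rhs => rw [← cfc_id' ℝ A hA.isHermitian.isSelfAdjoint]
  exact cfc_congr fun x hx => Real.mul_self_sqrt (spectrum_nonneg_of_nonneg hA.nonneg hx)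

lemma isUnit_det_posSemidefSqrt {A : Matrix (Fin d) (Fin d) ℝ} (hA : A.PosDef) :
    IsUnit (posSemidefSqrt hA.posSemidef).det := by
  refine isUnit_of_mul_isUnit_left (y := (posSemidefSqrt hA.posSemidef).det) ?_
  rw [← det_mul, posSemidefSqrt_mul_self]
  exact hA.det_pos.ne'.isUnit

theorem statement15_general (d : ℕ) (ρ : ℝ)
    (Sig₁ Sig₂ : Matrix (Fin d) (Fin d) ℝ) (h₁ : Sig₁.PosDef) (h₂ : Sig₂.PosDef)
    (H : Matrix (Fin d) (Fin d) ℝ) (hH : H.PosDef)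
    (hb₁ : frobNorm (1 - (posSemidefSqrt hH.posSemidef)⁻¹ * Sig₁ * (posSemidefSqrt hH.posSemidef)⁻¹) ≤ ρ)
    (hb₂ : frobNorm (1 - (posSemidefSqrt hH.posSemidef)⁻¹ * Sig₂ * (posSemidefSqrt hH.posSemidef)⁻¹) ≤ ρ)
    (Sig : Matrix (Fin d) (Fin d) ℝ) (hSig : Sig.PosDef) :
    frobNorm ((posSemidefSqrt hSig.posSemidef)⁻¹ * Sig₁ * (posSemidefSqrt hSig.posSemidef)⁻¹ -
        (posSemidefSqrt hSig.posSemidef)⁻¹ * Sig₂ * (posSemidefSqrt hSig.posSemidef)⁻¹) ≤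
      20 * ρ * max (opNorm ((posSemidefSqrt hSig.posSemidef)⁻¹ * Sig₁ * (posSemidefSqrt hSig.posSemidef)⁻¹))
        (opNorm ((posSemidefSqrt hSig.posSemidef)⁻¹ * Sig₂ * (posSemidefSqrt hSig.posSemidef)⁻¹)) := by
  set s := posSemidefSqrt hH.posSemidef
  set t := posSemidefSqrt hSig.posSemidef
  have hs : sᴴ = s := conjTranspose_posSemidefSqrt _
  have ht : tᴴ = t := conjTranspose_posSemidefSqrt _
  have hX {A : Matrix (Fin d) (Fin d) ℝ} (hA : A.PosDef) : 0 ≤ s⁻¹ * A * s⁻¹ := by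
    simpa only [star_eq_conjTranspose, conjTranspose_nonsing_inv, hs]
      using star_right_conjugate_nonneg hA.posSemidef.nonneg s⁻¹
  have hconj := inv_mul_mul_inv_eq_conj (isUnit_det_posSemidefSqrt hH) hs ht
  rw [hconj Sig₁, hconj Sig₂]
  exact frobNorm_conj_sub_le (t⁻¹ * s) (hX h₁) (hX h₂) hb₁ hb₂

/-- if a single positive definite `H` is an approximate square root of both
`Sig₁` and `Sig₂` (in relative Frobenius norm, up to `ρ ≥ 1`), then `Sig₁` and `Sig₂` are close in
the norm relative to any positive definite `Σ`. -/
theorem statement15 (d : ℕ) (ρ : ℝ) (hρ : 1 ≤ ρ)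
    (Sig₁ Sig₂ : Matrix (Fin d) (Fin d) ℝ) (h₁ : Sig₁.PosDef) (h₂ : Sig₂.PosDef)
    (H : Matrix (Fin d) (Fin d) ℝ) (hH : H.PosDef)
    (hb₁ : frobNorm (1 - (posSemidefSqrt hH.posSemidef)⁻¹ * Sig₁ * (posSemidefSqrt hH.posSemidef)⁻¹) ≤ ρ)
    (hb₂ : frobNorm (1 - (posSemidefSqrt hH.posSemidef)⁻¹ * Sig₂ * (posSemidefSqrt hH.posSemidef)⁻¹) ≤ ρ)
    (Sig : Matrix (Fin d) (Fin d) ℝ) (hSig : Sig.PosDef) :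
    frobNorm ((posSemidefSqrt hSig.posSemidef)⁻¹ * Sig₁ * (posSemidefSqrt hSig.posSemidef)⁻¹ -
        (posSemidefSqrt hSig.posSemidef)⁻¹ * Sig₂ * (posSemidefSqrt hSig.posSemidef)⁻¹) ≤
      20 * ρ * max (opNorm ((posSemidefSqrt hSig.posSemidef)⁻¹ * Sig₁ * (posSemidefSqrt hSig.posSemidef)⁻¹))
        (opNorm ((posSemidefSqrt hSig.posSemidef)⁻¹ * Sig₂ * (posSemidefSqrt hSig.posSemidef)⁻¹)) :=
  statement15_general d ρ Sig₁ Sig₂ h₁ h₂ H hH hb₁ hb₂ Sig hSig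

end ListDecCov
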